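/- For every integer N ≥ 1, the following identity of polynomials in q holds: ∑_{n=1}^{N} (−1)^{N−n} q^{N + n + nN + binom(N−n+1,2)} [N−1 choose n−1]_q = (−1)^{N+1} q^{binom(N+2,2)} ∏_{j=2}^{N}(1 − q^{j}), where binom(a,2) = a(a−1)/2. -/

import Mathlib

open Polynomial

/-- The q-Pochhammer symbol `(q;q)_n = ∏_{j=0}^{n-1} (1 - q^{j+1})` as a polynomial in `ℤ[q]`. -/
noncomputable def qPoch (n : ℕ) : Polynomial ℤ :=
  ∏ j ∈ Finset.range n, (1 - X ^ (j + 1))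

/-- The Gaussian (q-)binomial coefficient `[A choose B]_q`, viewed in the fraction field
of `ℤ[q]`: it equals `(q;q)_A / ((q;q)_B (q;q)_{A-B})` for `B ≤ A`, and `0` otherwise. -/
noncomputable def qBinom (A B : ℕ) : FractionRing (Polynomial ℤ) :=
  if B ≤ A then
    algebraMap (Polynomial ℤ) (FractionRing (Polynomial ℤ)) (qPoch A) /
      (algebraMap (Polynomial ℤ) (FractionRing (Polynomial ℤ)) (qPoch B) *
        algebraMap (Polynomial ℤ) (FractionRing (Polynomial ℤ)) (qPoch (A - B)))
  else 0

open Finset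

/-! Writing `N = M + 1` and `n = k + 1`, the summand equals `q^(3N)` times the `k`-th term of
Cauchy's q-binomial expansion of `∏_{i<M} (x - q^i)` at `x = q^N`. Since
`q^N - q^i = -q^i (1 - q^(N-i))`, that product is `(-1)^M q^C(M,2) ∏_{j=2}^{N} (1 - q^j)`, and
`3N + C(M,2) = C(N+2,2)`. -/

local notation "F" => FractionRing (Polynomial ℤ)
local notation "q" => algebraMap (Polynomial ℤ) F X

lemma algebraMap_qPoch (n : ℕ) :
    algebraMap (Polynomial ℤ) F (qPoch n) = ∏ j ∈ range n, (1 - q ^ (j + 1)) := by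
  simp [qPoch]

lemma one_sub_q_pow_ne_zero {n : ℕ} (hn : n ≠ 0) : (1 : F) - q ^ n ≠ 0 := by
  rw [← map_pow, ← map_one (algebraMap (Polynomial ℤ) F), ← map_sub,
    map_ne_zero_iff _ (IsFractionRing.injective _ _), ← neg_sub, neg_ne_zero, ← C_1]
  exact X_pow_sub_C_ne_zero (Nat.pos_of_ne_zero hn) 1

lemma prod_one_sub_q_pow_ne_zero (n : ℕ) : ∏ j ∈ range n, (1 - q ^ (j + 1)) ≠ 0 :=
  prod_ne_zero_iff.2 fun j _ => one_sub_q_pow_ne_zero j.succ_ne_zero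

lemma qBinom_zero_right (A : ℕ) : qBinom A 0 = 1 := by
  simp [qBinom, algebraMap_qPoch, prod_one_sub_q_pow_ne_zero]

lemma qBinom_self (A : ℕ) : qBinom A A = 1 := by
  simp [qBinom, algebraMap_qPoch, prod_one_sub_q_pow_ne_zero]

lemma qBinom_of_lt {A B : ℕ} (h : A < B) : qBinom A B = 0 :=
  if_neg h.not_ge

lemma qBinom_succ_succ (M k : ℕ) :
    qBinom (M + 1) (k + 1) = qBinom M k + q ^ (k + 1) * qBinom M (k + 1) := by
  rcases lt_trichotomy (k + 1) (M + 1) with hk | hk | hk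
  · obtain ⟨c, rfl⟩ : ∃ c, M = k + 1 + c := ⟨M - (k + 1), by omega⟩
    have h₁ : k + 1 + c + 1 - (k + 1) = c + 1 := by omega
    have h₂ : k + 1 + c - k = c + 1 := by omega
    have h₃ : k + 1 + c - (k + 1) = c := by omega
    simp only [qBinom, if_pos hk.le, if_pos (by omega : k ≤ k + 1 + c),
      if_pos (by omega : k + 1 ≤ k + 1 + c), h₁, h₂, h₃, algebraMap_qPoch, prod_range_succ]
    have := one_sub_q_pow_ne_zero (n := k + 1) (by omega)
    have := one_sub_q_pow_ne_zero (n := c + 1) (by omega)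
    have := prod_one_sub_q_pow_ne_zero k
    have := prod_one_sub_q_pow_ne_zero c
    field_simp
    ring
  · obtain rfl : k = M := by omega
    rw [qBinom_self, qBinom_self, qBinom_of_lt (Nat.lt_add_one k), mul_zero, add_zero]
  · rw [qBinom_of_lt hk, qBinom_of_lt (by omega), qBinom_of_lt (by omega), mul_zero, add_zero]

lemma neg_one_pow_mul_q_pow_choose_two_succ {M k : ℕ} (hk : k ≤ M) :
    (-1 : F) ^ (M + 1 - k) * q ^ (M + 1 - k).choose 2 * q ^ k =
      -(q ^ M * ((-1) ^ (M - k) * q ^ (M - k).choose 2)) := by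
  obtain ⟨d, rfl⟩ := Nat.exists_eq_add_of_le hk
  rw [show k + d + 1 - k = d + 1 by omega, Nat.add_sub_cancel_left, Nat.choose_succ_succ',
    Nat.choose_one_right]
  ring

/-- Cauchy's q-binomial theorem. -/
theorem prod_range_sub_q_pow (x : F) (M : ℕ) :
    ∏ i ∈ range M, (x - q ^ i) =
      ∑ k ∈ range (M + 1), (-1) ^ (M - k) * q ^ (M - k).choose 2 * x ^ k * qBinom M k := by
  induction M with
  | zero => simp [qBinom_zero_right]
  | succ M ih =>
    set g : ℕ → F := fun k => (-1) ^ (M + 1 - k) * q ^ (M + 1 - k).choose 2 * x ^ k *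
      (q ^ k * qBinom M k)
    have hA : ∑ l ∈ range (M + 1),
        (-1) ^ (M + 1 - (l + 1)) * q ^ (M + 1 - (l + 1)).choose 2 * x ^ (l + 1) * qBinom M l =
          x * ∏ i ∈ range M, (x - q ^ i) := by
      rw [ih, mul_sum]
      refine sum_congr rfl fun l _ => ?_
      rw [Nat.add_sub_add_right]
      ring
    have hB : ∑ l ∈ range (M + 1), g (l + 1) + g 0 = -(q ^ M * ∏ i ∈ range M, (x - q ^ i)) := by
      rw [← sum_range_succ', sum_range_succ, ih, mul_sum, ← sum_neg_distrib]
      simp only [g, qBinom_of_lt (Nat.lt_add_one M), mul_zero, add_zero]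
      refine sum_congr rfl fun k hk => ?_
      linear_combination x ^ k * qBinom M k *
        neg_one_pow_mul_q_pow_choose_two_succ (Nat.lt_add_one_iff.1 (mem_range.1 hk))
    rw [prod_range_succ, mul_comm, sub_mul, ← hA, sub_eq_add_neg, ← hB, sum_range_succ' _ (M + 1)]
    simp only [g, qBinom_succ_succ, qBinom_zero_right, mul_add, sum_add_distrib]
    ring

lemma prod_range_pow_succ_sub_pow {R : Type*} [CommRing R] (a : R) (M : ℕ) :
    ∏ i ∈ range M, (a ^ (M + 1) - a ^ i) =
      (-1) ^ M * a ^ M.choose 2 * ∏ j ∈ Icc 2 (M + 1), (1 - a ^ j) := by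
  have factor : ∀ i ∈ range M, a ^ (M + 1) - a ^ i = -1 * a ^ i * (1 - a ^ (M + 1 - i)) := by
    intro i hi
    rw [← pow_sub_mul_pow a (show i ≤ M + 1 by grind)]
    ring
  have reflect : ∏ i ∈ range M, (1 - a ^ (M + 1 - i)) = ∏ j ∈ Icc 2 (M + 1), (1 - a ^ j) := by
    refine prod_nbij' (M + 1 - ·) (M + 1 - ·) ?_ ?_ ?_ ?_ fun _ _ => rfl <;> intro i hi <;>
      simp only [mem_range, mem_Icc] at hi ⊢ <;> omega
  rw [prod_congr rfl factor, prod_mul_distrib, prod_mul_distrib, prod_const, card_range,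
    prod_pow_eq_pow_sum, sum_range_id, ← Nat.choose_two_right, reflect]

lemma sum_Icc_one_eq_sum_range {M : Type*} [AddCommMonoid M] (f : ℕ → M) (n : ℕ) :
    ∑ i ∈ Icc 1 n, f i = ∑ k ∈ range n, f (k + 1) := by
  rw [range_eq_Ico, sum_Ico_add', Ico_add_one_right_eq_Icc]

lemma choose_two_add_three (M : ℕ) : (M + 3).choose 2 = 3 * (M + 1) + M.choose 2 := by
  simp only [Nat.choose_succ_succ', Nat.choose_zero_right, zero_add, Nat.choose_one_right,
    Nat.reduceAdd]
  ring

/-- `∑_{n=1}^{N} (−1)^{N−n} q^{N + n + nN + binom(N−n+1,2)} [N−1 choose n−1]_q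
      = (−1)^{N+1} q^{binom(N+2,2)} ∏_{j=2}^{N} (1 − q^j)`. -/
theorem single_sum_identity (N : ℕ) (hN : 1 ≤ N) :
    ∑ n ∈ Finset.Icc 1 N,
      (-1 : FractionRing (Polynomial ℤ)) ^ (N - n) *
        algebraMap (Polynomial ℤ) (FractionRing (Polynomial ℤ))
          (X ^ (N + n + n * N + (N - n + 1).choose 2)) *
        qBinom (N - 1) (n - 1) =
    (-1 : FractionRing (Polynomial ℤ)) ^ (N + 1) *
      algebraMap (Polynomial ℤ) (FractionRing (Polynomial ℤ))
        (X ^ ((N + 2).choose 2) * ∏ j ∈ Finset.Icc 2 N, (1 - X ^ j)) := by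
  obtain ⟨M, rfl⟩ := Nat.exists_eq_add_of_le' hN
  have summand_eq : ∀ k ∈ range (M + 1),
      (-1 : F) ^ (M + 1 - (k + 1)) *
          algebraMap (Polynomial ℤ) F
            (X ^ (M + 1 + (k + 1) + (k + 1) * (M + 1) + (M + 1 - (k + 1) + 1).choose 2)) *
          qBinom (M + 1 - 1) (k + 1 - 1) =
        q ^ (3 * (M + 1)) *
          ((-1) ^ (M - k) * q ^ (M - k).choose 2 * (q ^ (M + 1)) ^ k * qBinom M k) := by
    intro k hk
    obtain ⟨d, rfl⟩ := Nat.exists_eq_add_of_le (Nat.lt_add_one_iff.1 (mem_range.1 hk))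
    simp only [Nat.add_sub_add_right, Nat.add_sub_cancel, Nat.add_sub_cancel_left, map_pow,
      Nat.choose_succ_succ', Nat.choose_one_right]
    ring
  calc _ = ∑ k ∈ range (M + 1), q ^ (3 * (M + 1)) *
          ((-1) ^ (M - k) * q ^ (M - k).choose 2 * (q ^ (M + 1)) ^ k * qBinom M k) := by
        rw [sum_Icc_one_eq_sum_range, sum_congr rfl summand_eq]
    _ = q ^ (3 * (M + 1)) * ∏ i ∈ range M, (q ^ (M + 1) - q ^ i) := by
        rw [← mul_sum, prod_range_sub_q_pow]
    _ = _ := by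
        rw [prod_range_pow_succ_sub_pow, choose_two_add_three]
        simp only [map_mul, map_pow, map_prod, map_sub, map_one]
        ring
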